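/- Let (b, B, m, μ) be an admissible parameter set and assume K is regular. For u ∈ K let ψ(·,u) be the unique K-valued C¹-solution of ∂ψ/∂t = R(ψ), ψ(0,u) = u. Then for all M, T ≥ 0 there exists a constant C(M,T) ≥ 0 such that for all u, v ∈ K with ‖u‖ ≤ M and ‖v‖ ≤ M and all t ∈ [0,T], one has ‖ψ(t,u) − ψ(t,v)‖ ≤ C(M,T) ‖u − v‖. -/

import Mathlib

open MeasureTheory Filter
open scoped RealInnerProductSpace Topology ENNReal

noncomputable section

def IsSelfDualCone {H : Type*} [NormedAddCommGroup H] [InnerProductSpace ℝ H]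
    (K : Set H) : Prop :=
  K = {x : H | ∀ y ∈ K, 0 ≤ ⟪x, y⟫}

def trunc {H : Type*} [NormedAddCommGroup H] [InnerProductSpace ℝ H] (ξ : H) : H :=
  if ‖ξ‖ ≤ 1 then ξ else 0

structure AdmissibleParams (H : Type*) [NormedAddCommGroup H] [InnerProductSpace ℝ H]
    [CompleteSpace H] [MeasurableSpace H] [BorelSpace H] (K : Set H) where
  b : H
  B : H →L[ℝ] H
  m : Measure H
  ν : H → Measure H
  muVec : Set H → H
  m_support : m ((K \ {0})ᶜ) = 0
  m_sq : IntegrableOn (fun ξ : H => ‖ξ‖ ^ 2) (K \ {0}) m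
  m_chi : ∀ h : H, IntegrableOn (fun ξ : H => |⟪trunc ξ, h⟫|) (K \ {0}) m
  m_Im : ∃ Im : H, ∀ h : H, ⟪Im, h⟫ = ∫ ξ in K \ {0}, ⟪trunc ξ, h⟫ ∂m
  b_drift : ∀ v ∈ K, 0 ≤ ⟪b, v⟫ - ∫ ξ in K \ {0}, ⟪trunc ξ, v⟫ ∂m
  ν_finite : ∀ x ∈ K, IsFiniteMeasure (ν x)
  ν_support : ∀ x ∈ K, ν x ((K \ {0})ᶜ) = 0
  ν_add : ∀ x ∈ K, ∀ y ∈ K, ν (x + y) = ν x + ν y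
  ν_smul : ∀ x ∈ K, ∀ c : ℝ, 0 ≤ c → ν (c • x) = ENNReal.ofReal c • ν x
  ν_int : ∀ u ∈ K, ∀ x ∈ K, ⟪u, x⟫ = 0 →
    IntegrableOn (fun ξ : H => ⟪trunc ξ, u⟫ / ‖ξ‖ ^ 2) (K \ {0}) (ν x)
  B_quasi : ∀ u ∈ K, ∀ x ∈ K, ⟪u, x⟫ = 0 →
    0 ≤ ⟪ContinuousLinearMap.adjoint B u, x⟫
      - ∫ ξ in K \ {0}, ⟪trunc ξ, u⟫ / ‖ξ‖ ^ 2 ∂(ν x)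
  muVec_mem : ∀ S : Set H, MeasurableSet S → muVec S ∈ K
  muVec_spec : ∀ S : Set H, MeasurableSet S → ∀ x ∈ K, ⟪muVec S, x⟫ = (ν x S).toReal

def IsRegularCone {H : Type*} [NormedAddCommGroup H] [InnerProductSpace ℝ H]
    (K : Set H) : Prop :=
  ∀ (y : H) (x : ℕ → H), y ∈ K → (∀ n, x n ∈ K) →
    (∀ n, x (n + 1) - x n ∈ K) → (∀ n, y - x n ∈ K) →
    ∃ l : H, Filter.Tendsto x Filter.atTop (nhds l)

/-!
`R` is Lipschitz on bounded parts of `K`. Paired with `q ∈ K`, `R x - R y` splits into a drift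
term bounded through `‖B‖` and a jump term whose integrand is Lipschitz in `x` uniformly in `ξ`
and whose total mass `ν_q(K ∖ {0}) = ⟪μ(K ∖ {0}), q⟫` is at most linear in `‖q‖`. The Moreau
decomposition `z = x - y` with `x, y ∈ K`, `x ⟂ y`, turns such bounds on pairings with the cone
into a bound on `‖z‖`. Since the integrand is at least `-1`, `2⟪w, R w⟫` grows at most
quadratically in `‖w‖`, so by Grönwall solutions starting in the `M`-ball stay in a fixed ball
on `[0, T]`; Grönwall once more, now for the difference of two solutions, gives `C = e^{LT}`.
-/

open Set ContinuousLinearMap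

namespace IsSelfDualCone

variable {H : Type*} [NormedAddCommGroup H] [InnerProductSpace ℝ H] {K : Set H}

theorem mem_iff (hK : IsSelfDualCone K) {x : H} : x ∈ K ↔ ∀ y ∈ K, 0 ≤ ⟪x, y⟫ :=
  Set.ext_iff.1 hK x

theorem inner_nonneg (hK : IsSelfDualCone K) {x y : H} (hx : x ∈ K) (hy : y ∈ K) :
    0 ≤ ⟪x, y⟫ :=
  hK.mem_iff.1 hx y hy

theorem zero_mem (hK : IsSelfDualCone K) : (0 : H) ∈ K :=
  hK.mem_iff.2 fun y _ => by simp

theorem add_mem (hK : IsSelfDualCone K) {x y : H} (hx : x ∈ K) (hy : y ∈ K) : x + y ∈ K :=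
  hK.mem_iff.2 fun z hz => by
    rw [inner_add_left]
    exact add_nonneg (hK.inner_nonneg hx hz) (hK.inner_nonneg hy hz)

theorem eq_iInter (hK : IsSelfDualCone K) : K = ⋂ y ∈ K, {x : H | 0 ≤ ⟪y, x⟫} := by
  ext x
  rw [mem_iInter₂, hK.mem_iff]
  exact forall₂_congr fun y _ => by rw [real_inner_comm]; rfl

theorem isClosed (hK : IsSelfDualCone K) : IsClosed K := by
  rw [hK.eq_iInter]
  exact isClosed_biInter fun y _ => isClosed_le continuous_const (by fun_prop)

theorem convex (hK : IsSelfDualCone K) : Convex ℝ K := by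
  rw [hK.eq_iInter]
  exact convex_iInter₂ fun y _ =>
    convex_halfSpace_ge (innerₛₗ ℝ y).isLinear 0

theorem measurableSet_diff_zero [MeasurableSpace H] [BorelSpace H] (hK : IsSelfDualCone K) :
    MeasurableSet (K \ {0}) :=
  hK.isClosed.measurableSet.diff (measurableSet_singleton 0)

/-- Moreau decomposition: `x` is the metric projection of `z` onto `K`. -/
theorem exists_sub_eq_of_inner_eq_zero [CompleteSpace H] (hK : IsSelfDualCone K) (z : H) :
    ∃ x ∈ K, ∃ y ∈ K, z = x - y ∧ ⟪x, y⟫ = 0 := by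
  obtain ⟨x, hx, hmin⟩ := exists_norm_eq_iInf_of_complete_convex ⟨0, hK.zero_mem⟩
    hK.isClosed.isComplete hK.convex z
  have hproj := (norm_eq_iInf_iff_real_inner_le_zero hK.convex hx).1 hmin
  have hy : x - z ∈ K := hK.mem_iff.2 fun w hw => by
    have := hproj (x + w) (hK.add_mem hx hw)
    rw [add_sub_cancel_left, ← neg_sub, inner_neg_left] at this
    linarith
  refine ⟨x, hx, x - z, hy, by abel, le_antisymm ?_ (hK.inner_nonneg hx hy)⟩
  have := hproj 0 hK.zero_mem
  rwa [zero_sub, inner_neg_right, ← neg_sub, inner_neg_left, neg_neg, real_inner_comm] at this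

theorem norm_le_of_abs_inner_le [CompleteSpace H] (hK : IsSelfDualCone K) {z : H} {c : ℝ}
    (hc : 0 ≤ c) (h : ∀ q ∈ K, |⟪z, q⟫| ≤ c * ‖q‖) : ‖z‖ ≤ 2 * c := by
  obtain ⟨x, hx, y, hy, rfl, hxy⟩ := hK.exists_sub_eq_of_inner_eq_zero z
  have hpyth : ‖x - y‖ ^ 2 = ‖x‖ ^ 2 + ‖y‖ ^ 2 := by
    rw [← real_inner_self_eq_norm_sq, ← real_inner_self_eq_norm_sq,
      ← real_inner_self_eq_norm_sq, real_inner_sub_sub_self, hxy]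
    ring
  have hxn : ‖x‖ ≤ ‖x - y‖ := by nlinarith [norm_nonneg x, norm_nonneg (x - y)]
  have hyn : ‖y‖ ≤ ‖x - y‖ := by nlinarith [norm_nonneg y, norm_nonneg (x - y)]
  have hsq : ‖x - y‖ ^ 2 ≤ 2 * c * ‖x - y‖ :=
    calc ‖x - y‖ ^ 2 = ⟪x - y, x⟫ - ⟪x - y, y⟫ := by
          rw [← inner_sub_right, real_inner_self_eq_norm_sq]
      _ ≤ c * ‖x‖ + c * ‖y‖ :=
          add_le_add ((le_abs_self _).trans (h x hx)) ((neg_le_abs _).trans (h y hy))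
      _ ≤ 2 * c * ‖x - y‖ := by nlinarith
  nlinarith [norm_nonneg (x - y)]

end IsSelfDualCone

theorem Real.exp_neg_sub_exp_neg_le {a c : ℝ} (ha : 0 ≤ a) (hac : a ≤ c) :
    exp (-a) - exp (-c) ≤ c - a := by
  have hsplit : exp (-c) = exp (-a) * exp (-(c - a)) := by rw [← exp_add]; ring_nf
  have h1 : 1 - exp (-(c - a)) ≤ c - a := by linarith [add_one_le_exp (-(c - a))]
  have h2 : 0 ≤ 1 - exp (-(c - a)) := by
    rw [sub_nonneg]; exact exp_le_one_iff.2 (by linarith)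
  have h3 : exp (-a) ≤ 1 := exp_le_one_iff.2 (by linarith)
  rw [hsplit]
  nlinarith [exp_pos (-a)]

theorem Real.mul_one_sub_le_exp_neg_sub_exp_neg {a c : ℝ} (hac : a ≤ c) :
    (c - a) * (1 - c) ≤ exp (-a) - exp (-c) := by
  have hsplit : exp (-a) = exp (-c) * exp (c - a) := by rw [← exp_add]; ring_nf
  have h1 : c - a ≤ exp (c - a) - 1 := by linarith [add_one_le_exp (c - a)]
  have h2 : 1 - c ≤ exp (-c) := by linarith [add_one_le_exp (-c)]
  rw [hsplit]
  nlinarith [exp_pos (-c)]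

section LevyIntegrand

variable {H : Type*} [NormedAddCommGroup H] [InnerProductSpace ℝ H]

def levyIntegrand (u ξ : H) : ℝ := (Real.exp (-⟪ξ, u⟫) - 1 + ⟪trunc ξ, u⟫) / ‖ξ‖ ^ 2

@[simp]
theorem levyIntegrand_zero_left (ξ : H) : levyIntegrand 0 ξ = 0 := by
  simp [levyIntegrand]

theorem measurable_trunc [MeasurableSpace H] [BorelSpace H] : Measurable (trunc : H → H) :=
  Measurable.ite (measurableSet_le (by fun_prop) measurable_const) measurable_id measurable_const

theorem measurable_levyIntegrand [MeasurableSpace H] [BorelSpace H] (u : H) :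
    Measurable (levyIntegrand u) := by
  have := measurable_trunc (H := H)
  unfold levyIntegrand
  fun_prop

theorem neg_one_le_levyIntegrand {u ξ : H} (hξ : ξ ≠ 0) :
    -1 ≤ levyIntegrand u ξ := by
  have hξ2 : 0 < ‖ξ‖ ^ 2 := by positivity
  rw [levyIntegrand, le_div_iff₀ hξ2, trunc]
  split_ifs with h1
  · nlinarith [Real.add_one_le_exp (-⟪ξ, u⟫)]
  · rw [inner_zero_left]
    nlinarith [Real.exp_pos (-⟪ξ, u⟫)]

theorem abs_levyIntegrand_sub_le {x y ξ : H} {ρ : ℝ} (hξ : ξ ≠ 0) (hx : 0 ≤ ⟪ξ, x⟫)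
    (hy : 0 ≤ ⟪ξ, y⟫) (hxρ : ‖x‖ ≤ ρ) (hyρ : ‖y‖ ≤ ρ) :
    |levyIntegrand x ξ - levyIntegrand y ξ| ≤ (ρ + 1) * ‖x - y‖ := by
  wlog hyx : ⟪ξ, y⟫ ≤ ⟪ξ, x⟫ generalizing x y
  · rw [abs_sub_comm, norm_sub_rev]
    exact this hy hx hyρ hxρ (le_of_not_ge hyx)
  have hξ0 : 0 < ‖ξ‖ := norm_pos_iff.2 hξ
  have hρ : 0 ≤ ρ := (norm_nonneg x).trans hxρ
  have hdiff : ⟪ξ, x⟫ - ⟪ξ, y⟫ ≤ ‖ξ‖ * ‖x - y‖ := by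
    rw [← inner_sub_right]; exact real_inner_le_norm _ _
  have hxle : ⟪ξ, x⟫ ≤ ‖ξ‖ * ρ :=
    (real_inner_le_norm _ _).trans (mul_le_mul_of_nonneg_left hxρ hξ0.le)
  have hlo := Real.mul_one_sub_le_exp_neg_sub_exp_neg hyx
  have hhi := Real.exp_neg_sub_exp_neg_le hy hyx
  have hξ2 : 0 < ‖ξ‖ ^ 2 := by positivity
  rw [levyIntegrand, levyIntegrand, ← sub_div, abs_div, abs_of_pos hξ2, div_le_iff₀ hξ2, trunc]
  -- For `‖ξ‖ ≤ 1`, `s ↦ e^{-s} - 1 + s` has slope `1 - e^{-s} ∈ [0, s]`; for `‖ξ‖ > 1`, only the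
  -- 1-Lipschitz `e^{-s}` is left and `‖ξ‖ ≤ ‖ξ‖ ^ 2` absorbs the weight.
  split_ifs with h1
  · rw [abs_le]
    constructor
    · nlinarith [norm_nonneg (x - y)]
    · nlinarith [norm_nonneg (x - y)]
  · rw [inner_zero_left, inner_zero_left, abs_le]
    constructor
    · nlinarith [norm_nonneg (x - y)]
    · nlinarith [norm_nonneg (x - y)]

end LevyIntegrand

theorem norm_sq_le_gronwallBound_of_inner_deriv_le {E : Type*} [NormedAddCommGroup E]
    [InnerProductSpace ℝ E] {f f' : ℝ → E} {δ K ε a b : ℝ} (hf : ContinuousOn f (Icc a b))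
    (hf' : ∀ x ∈ Ico a b, HasDerivWithinAt f (f' x) (Ici x) x) (ha : ‖f a‖ ^ 2 ≤ δ)
    (bound : ∀ x ∈ Ico a b, 2 * ⟪f x, f' x⟫ ≤ K * ‖f x‖ ^ 2 + ε) :
    ∀ x ∈ Icc a b, ‖f x‖ ^ 2 ≤ gronwallBound δ K ε (x - a) :=
  le_gronwallBound_of_liminf_deriv_right_le (hf.norm.pow 2)
    (fun x hx _ hr => (hf' x hx).norm_sq.liminf_right_slope_le hr) ha bound

theorem continuousOn_Icc_and_hasDerivWithinAt_Ici {E : Type*} [NormedAddCommGroup E]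
    [NormedSpace ℝ E] {f f' : ℝ → E} (hf : ∀ s, 0 ≤ s → HasDerivWithinAt f (f' s) (Ici 0) s)
    (T : ℝ) :
    ContinuousOn f (Icc 0 T) ∧ ∀ s ∈ Ico 0 T, HasDerivWithinAt f (f' s) (Ici s) s :=
  ⟨fun s hs => (hf s hs.1).continuousWithinAt.mono Icc_subset_Ici_self,
    fun s hs => (hf s hs.1).mono (Ici_subset_Ici.2 hs.1)⟩

section RiccatiOperator

variable {H : Type*} [NormedAddCommGroup H] [InnerProductSpace ℝ H] [CompleteSpace H]
  [MeasurableSpace H] [BorelSpace H] {K : Set H}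

/-- The vector field of the generalized Riccati equation `∂ψ/∂t = R(ψ)`, specified through its
pairings with the cone. -/
def IsRiccatiOperator (p : AdmissibleParams H K) (R : H → H) : Prop :=
  ∀ u ∈ K, ∀ x ∈ K,
    ⟪R u, x⟫ = ⟪adjoint p.B u, x⟫ - ∫ ξ in K \ {0}, levyIntegrand u ξ ∂(p.ν x)

namespace AdmissibleParams

variable (p : AdmissibleParams H K)

theorem measureReal_le (hK : IsSelfDualCone K) {q : H} (hq : q ∈ K) :
    (p.ν q).real (K \ {0}) ≤ ‖p.muVec (K \ {0})‖ * ‖q‖ := by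
  rw [measureReal_def, ← p.muVec_spec _ hK.measurableSet_diff_zero q hq]
  exact real_inner_le_norm _ _

theorem integrableOn_levyIntegrand (hK : IsSelfDualCone K) {u q : H} (hu : u ∈ K)
    (hq : q ∈ K) : IntegrableOn (levyIntegrand u) (K \ {0}) (p.ν q) := by
  have := p.ν_finite q hq
  refine Integrable.mono' (integrableOn_const (C := (‖u‖ + 1) * ‖u‖) (measure_ne_top _ _))
    (measurable_levyIntegrand u).aestronglyMeasurable
    (ae_restrict_of_forall_mem hK.measurableSet_diff_zero fun ξ hξ => ?_)
  simpa using abs_levyIntegrand_sub_le (y := 0) hξ.2 (hK.inner_nonneg hξ.1 hu) (by simp)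
    le_rfl (by simp)

end AdmissibleParams

namespace IsRiccatiOperator

variable {p : AdmissibleParams H K} {R : H → H} (hR : IsRiccatiOperator p R)
include hR

theorem abs_inner_sub_le (hK : IsSelfDualCone K) {x y q : H} {ρ : ℝ} (hx : x ∈ K) (hy : y ∈ K)
    (hxρ : ‖x‖ ≤ ρ) (hyρ : ‖y‖ ≤ ρ) (hq : q ∈ K) :
    |⟪R x - R y, q⟫| ≤
      (‖adjoint p.B‖ + (ρ + 1) * ‖p.muVec (K \ {0})‖) * ‖x - y‖ * ‖q‖ := by
  have := p.ν_finite q hq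
  have hρ : 0 ≤ ρ + 1 := by linarith [(norm_nonneg x).trans hxρ]
  have hsplit : ⟪R x - R y, q⟫ = ⟪adjoint p.B (x - y), q⟫
      - ∫ ξ in K \ {0}, (levyIntegrand x ξ - levyIntegrand y ξ) ∂(p.ν q) := by
    rw [inner_sub_left, hR x hx q hq, hR y hy q hq, map_sub, inner_sub_left,
      integral_sub (p.integrableOn_levyIntegrand hK hx hq) (p.integrableOn_levyIntegrand hK hy hq)]
    ring
  have hdrift : |⟪adjoint p.B (x - y), q⟫| ≤ ‖adjoint p.B‖ * ‖x - y‖ * ‖q‖ :=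
    (abs_real_inner_le_norm _ _).trans (by gcongr; exact le_opNorm _ _)
  have hjump : |∫ ξ in K \ {0}, (levyIntegrand x ξ - levyIntegrand y ξ) ∂(p.ν q)| ≤
      (ρ + 1) * ‖x - y‖ * (‖p.muVec (K \ {0})‖ * ‖q‖) :=
    calc _ ≤ (ρ + 1) * ‖x - y‖ * (p.ν q).real (K \ {0}) := by
          rw [← Real.norm_eq_abs]
          exact norm_setIntegral_le_of_norm_le_const (measure_lt_top _ _) fun ξ hξ =>
            abs_levyIntegrand_sub_le hξ.2 (hK.inner_nonneg hξ.1 hx) (hK.inner_nonneg hξ.1 hy)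
              hxρ hyρ
      _ ≤ _ := by gcongr; exact p.measureReal_le hK hq
  rw [hsplit]
  calc _ ≤ _ := abs_sub _ _
    _ ≤ _ := add_le_add hdrift hjump
    _ = _ := by ring

theorem norm_sub_le (hK : IsSelfDualCone K) {x y : H} {ρ : ℝ} (hx : x ∈ K) (hy : y ∈ K)
    (hxρ : ‖x‖ ≤ ρ) (hyρ : ‖y‖ ≤ ρ) :
    ‖R x - R y‖ ≤ 2 * (‖adjoint p.B‖ + (ρ + 1) * ‖p.muVec (K \ {0})‖) * ‖x - y‖ := by
  have hρ : 0 ≤ ρ + 1 := by linarith [(norm_nonneg x).trans hxρ]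
  rw [mul_assoc]
  exact hK.norm_le_of_abs_inner_le (by positivity) fun q hq =>
    (hR.abs_inner_sub_le hK hx hy hxρ hyρ hq).trans_eq (by ring)

theorem exists_lipschitzOnWith (hK : IsSelfDualCone K) (ρ : ℝ) :
    ∃ L, LipschitzOnWith L R (K ∩ Metric.closedBall 0 ρ) :=
  ⟨_, LipschitzOnWith.of_dist_le' fun x hx y hy => by
    simp only [dist_eq_norm]
    exact hR.norm_sub_le hK hx.1 hy.1 (mem_closedBall_zero_iff.1 hx.2)
      (mem_closedBall_zero_iff.1 hy.2)⟩

theorem two_mul_inner_self_le (hK : IsSelfDualCone K) {w : H} (hw : w ∈ K) :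
    2 * ⟪w, R w⟫ ≤ (2 * ‖adjoint p.B‖ + ‖p.muVec (K \ {0})‖) * ‖w‖ ^ 2
      + ‖p.muVec (K \ {0})‖ := by
  have := p.ν_finite w hw
  have hjump : -(‖p.muVec (K \ {0})‖ * ‖w‖) ≤ ∫ ξ in K \ {0}, levyIntegrand w ξ ∂(p.ν w) :=
    calc _ ≤ -1 * (p.ν w).real (K \ {0}) := by linarith [p.measureReal_le hK hw]
      _ ≤ _ := setIntegral_ge_of_const_le_real hK.measurableSet_diff_zero (measure_ne_top _ _)
          (fun ξ hξ => neg_one_le_levyIntegrand hξ.2) (p.integrableOn_levyIntegrand hK hw hw)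
  have hdrift : ⟪adjoint p.B w, w⟫ ≤ ‖adjoint p.B‖ * ‖w‖ ^ 2 :=
    (real_inner_le_norm _ _).trans (by rw [sq, ← mul_assoc]; gcongr; exact le_opNorm _ _)
  rw [real_inner_comm, hR w hw w hw]
  nlinarith [sq_nonneg (‖w‖ - 1), norm_nonneg (p.muVec (K \ {0}))]

theorem norm_le_of_hasDerivWithinAt (hK : IsSelfDualCone K) {f : ℝ → H} {M T t : ℝ}
    (hf : ContinuousOn f (Icc 0 T)) (hf' : ∀ s ∈ Ico 0 T, HasDerivWithinAt f (R (f s)) (Ici s) s)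
    (hfK : ∀ s ∈ Ico 0 T, f s ∈ K) (hf0 : ‖f 0‖ ≤ M) (ht : t ∈ Icc 0 T) :
    ‖f t‖ ≤ √(gronwallBound (M ^ 2) (2 * ‖adjoint p.B‖ + ‖p.muVec (K \ {0})‖)
      ‖p.muVec (K \ {0})‖ T) := by
  have hsq := norm_sq_le_gronwallBound_of_inner_deriv_le hf hf'
    (pow_le_pow_left₀ (norm_nonneg _) hf0 2) (fun s hs => hR.two_mul_inner_self_le hK (hfK s hs))
    t ht
  rw [sub_zero] at hsq
  exact Real.le_sqrt_of_sq_le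
    (hsq.trans (gronwallBound_mono (sq_nonneg M) (norm_nonneg _) (by positivity) ht.2))

theorem exists_norm_sub_le (hK : IsSelfDualCone K) (M T : ℝ) :
    ∃ C, 0 ≤ C ∧ ∀ f g : ℝ → H, ‖f 0‖ ≤ M → ‖g 0‖ ≤ M →
      (∀ s, 0 ≤ s → f s ∈ K) → (∀ s, 0 ≤ s → HasDerivWithinAt f (R (f s)) (Ici 0) s) →
      (∀ s, 0 ≤ s → g s ∈ K) → (∀ s, 0 ≤ s → HasDerivWithinAt g (R (g s)) (Ici 0) s) →
      ∀ t ∈ Icc 0 T, ‖f t - g t‖ ≤ C * ‖f 0 - g 0‖ := by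
  set ρ := √(gronwallBound (M ^ 2) (2 * ‖adjoint p.B‖ + ‖p.muVec (K \ {0})‖)
    ‖p.muVec (K \ {0})‖ T)
  obtain ⟨L, hL⟩ := hR.exists_lipschitzOnWith hK ρ
  refine ⟨Real.exp (L * T), (Real.exp_pos _).le, fun f g hf0 hg0 hfK hf hgK hg t ht => ?_⟩
  obtain ⟨hfc, hf'⟩ := continuousOn_Icc_and_hasDerivWithinAt_Ici hf T
  obtain ⟨hgc, hg'⟩ := continuousOn_Icc_and_hasDerivWithinAt_Ici hg T
  have hball : ∀ {h : ℝ → H}, ContinuousOn h (Icc 0 T) →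
      (∀ s ∈ Ico 0 T, HasDerivWithinAt h (R (h s)) (Ici s) s) → (∀ s, 0 ≤ s → h s ∈ K) →
      ‖h 0‖ ≤ M → ∀ s ∈ Ico 0 T, h s ∈ K ∩ Metric.closedBall 0 ρ :=
    fun hc hd hhK h0 s hs => ⟨hhK s hs.1, mem_closedBall_zero_iff.2
      (hR.norm_le_of_hasDerivWithinAt hK hc hd (fun r hr => hhK r hr.1) h0
        (Ico_subset_Icc_self hs))⟩
  have hdist := dist_le_of_trajectories_ODE_of_mem (v := fun _ => R) (fun _ _ => hL)
    hfc hf' (hball hfc hf' hfK hf0) hgc hg' (hball hgc hg' hgK hg0) le_rfl t ht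
  rw [dist_eq_norm, dist_eq_norm, sub_zero] at hdist
  calc ‖f t - g t‖ ≤ ‖f 0 - g 0‖ * Real.exp (L * t) := hdist
    _ ≤ Real.exp (L * T) * ‖f 0 - g 0‖ := by rw [mul_comm]; gcongr; exact ht.2

end IsRiccatiOperator

end RiccatiOperator

theorem stmt_10_general {H : Type*} [NormedAddCommGroup H] [InnerProductSpace ℝ H] [CompleteSpace H]
    [MeasurableSpace H] [BorelSpace H] (K : Set H)
    (hK : IsSelfDualCone K)
    (p : AdmissibleParams H K)
    (R : H → H)
    (hR : ∀ u ∈ K, ∀ x ∈ K, ⟪R u, x⟫ =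
      ⟪ContinuousLinearMap.adjoint p.B u, x⟫
        - ∫ ξ in K \ {0}, (Real.exp (-⟪ξ, u⟫) - 1 + ⟪trunc ξ, u⟫) / ‖ξ‖ ^ 2 ∂(p.ν x))
    (ψ : ℝ → H → H)
    (hψ : ∀ u ∈ K, ψ 0 u = u ∧ (∀ t, 0 ≤ t → ψ t u ∈ K) ∧
      (∀ t, 0 ≤ t → HasDerivWithinAt (fun s => ψ s u) (R (ψ t u)) (Set.Ici 0) t)) :
    ∀ M T : ℝ, 0 ≤ M → 0 ≤ T → ∃ C : ℝ, 0 ≤ C ∧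
      ∀ u ∈ K, ∀ v ∈ K, ‖u‖ ≤ M → ‖v‖ ≤ M → ∀ t ∈ Set.Icc (0 : ℝ) T,
        ‖ψ t u - ψ t v‖ ≤ C * ‖u - v‖ := by
  intro M T _ _
  obtain ⟨C, hC, hlip⟩ := IsRiccatiOperator.exists_norm_sub_le (p := p) hR hK M T
  refine ⟨C, hC, fun u hu v hv huM hvM t ht => ?_⟩
  obtain ⟨hu0, huK, hu'⟩ := hψ u hu
  obtain ⟨hv0, hvK, hv'⟩ := hψ v hv
  simpa only [hu0, hv0] using
    hlip (ψ · u) (ψ · v) (by rwa [hu0]) (by rwa [hv0]) huK hu' hvK hv' t ht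

/-- Local Lipschitz continuity of `ψ(t,·)` in the initial value:
for all `M, T ≥ 0` there is `C(M,T) ≥ 0` with `‖ψ(t,u) − ψ(t,v)‖ ≤ C(M,T)‖u − v‖`
whenever `‖u‖, ‖v‖ ≤ M` and `t ∈ [0,T]`. -/
theorem stmt_10 {H : Type*} [NormedAddCommGroup H] [InnerProductSpace ℝ H] [CompleteSpace H]
    [MeasurableSpace H] [BorelSpace H] (K : Set H)
    (hK : IsSelfDualCone K) (hKgen : ∀ z : H, ∃ x ∈ K, ∃ y ∈ K, z = x - y)
    (hreg : IsRegularCone K)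
    (p : AdmissibleParams H K)
    (R : H → H)
    (hR : ∀ u ∈ K, ∀ x ∈ K, ⟪R u, x⟫ =
      ⟪ContinuousLinearMap.adjoint p.B u, x⟫
        - ∫ ξ in K \ {0}, (Real.exp (-⟪ξ, u⟫) - 1 + ⟪trunc ξ, u⟫) / ‖ξ‖ ^ 2 ∂(p.ν x))
    (ψ : ℝ → H → H)
    (hψ : ∀ u ∈ K, ψ 0 u = u ∧ (∀ t, 0 ≤ t → ψ t u ∈ K) ∧
      (∀ t, 0 ≤ t → HasDerivWithinAt (fun s => ψ s u) (R (ψ t u)) (Set.Ici 0) t))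
    (hψuniq : ∀ u ∈ K, ∀ g : ℝ → H, g 0 = u → (∀ t, 0 ≤ t → g t ∈ K) →
      (∀ t, 0 ≤ t → HasDerivWithinAt g (R (g t)) (Set.Ici 0) t) →
      ∀ t, 0 ≤ t → g t = ψ t u) :
    ∀ M T : ℝ, 0 ≤ M → 0 ≤ T → ∃ C : ℝ, 0 ≤ C ∧
      ∀ u ∈ K, ∀ v ∈ K, ‖u‖ ≤ M → ‖v‖ ≤ M → ∀ t ∈ Set.Icc (0 : ℝ) T,
        ‖ψ t u - ψ t v‖ ≤ C * ‖u - v‖ :=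
  stmt_10_general K hK p R hR ψ hψ
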